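/- For every g = (a_{ij}) ∈ SL(2,ℂ), every m ∈ ℤ, ρ ∈ ℝ, and every f ∈ L²(ℂ), the function T^{(m,ρ)}(g)f belongs to L²(ℂ) and has the same L² norm as f; consequently T^{(m,ρ)}(g) extends to a unitary operator on L²(ℂ). -/

import Mathlib

open MeasureTheory Complex

noncomputable section

/-- The principal series operator `T^{(m,ρ)}(g)` of `SL(2,ℂ)` acting on functions on `ℂ`. -/
def principalSeriesC (m : ℤ) (ρ : ℝ) (g : Matrix.SpecialLinearGroup (Fin 2) ℂ)
    (f : ℂ → ℂ) : ℂ → ℂ := fun z =>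
  (‖g.1 0 1 * z + g.1 1 1‖ : ℂ) ^ ((-2 + (m : ℂ)) + Complex.I * (ρ : ℂ)) *
    (g.1 0 1 * z + g.1 1 1) ^ (-m) *
    f ((g.1 0 0 * z + g.1 1 0) / (g.1 0 1 * z + g.1 1 1))

/-! The Möbius map `φ z = (a₁₁ z + a₂₁) / (a₁₂ z + a₂₂)` is holomorphic off the (at most one)
point where its denominator `L z` vanishes, with `φ' = L⁻²`; viewed as a real map its Jacobian is
therefore `|L|⁻⁴`, while the multiplier of `T^{(m,ρ)}(g)` has modulus `|L|⁻²`. Hence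
`|T f|² = Jac φ · |f ∘ φ|²` and the change of variables formula gives `‖T f‖₂ = ‖f‖₂`. Moreover
the denominator of `g⁻¹` at `φ z` is `(L z)⁻¹`, so the multipliers cancel in `T(g) T(g⁻¹) f = f`:
the isometry is onto. -/

open Set
open scoped ENNReal

theorem det_restrictScalars_toSpanSingleton (v : ℂ) :
    ((ContinuousLinearMap.toSpanSingleton ℂ v).restrictScalars ℝ).det = normSq v := by
  simp [ContinuousLinearMap.det, LinearMap.det_restrictScalars, Algebra.norm_complex_eq]

theorem lintegral_image_eq_lintegral_enorm_deriv_sq_mul {s : Set ℂ} {f f' : ℂ → ℂ}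
    (hs : MeasurableSet s) (hf' : ∀ x ∈ s, HasDerivWithinAt f (f' x) s x) (hf : InjOn f s)
    (g : ℂ → ℝ≥0∞) :
    ∫⁻ x in f '' s, g x = ∫⁻ x in s, ‖f' x‖ₑ ^ 2 * g (f x) := by
  rw [lintegral_image_eq_lintegral_abs_det_fderiv_mul volume hs
    (fun x hx => ((hf' x hx).hasFDerivWithinAt).restrictScalars ℝ) hf g]
  refine setLIntegral_congr_fun hs fun x _ => ?_
  rw [det_restrictScalars_toSpanSingleton, abs_of_nonneg (normSq_nonneg _), normSq_eq_norm_sq,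
    ENNReal.ofReal_pow (norm_nonneg _), ofReal_norm]

section Moebius

variable (g : Matrix.SpecialLinearGroup (Fin 2) ℂ)

def moebiusDenom (z : ℂ) : ℂ := g.1 0 1 * z + g.1 1 1

def moebius (z : ℂ) : ℂ := (g.1 0 0 * z + g.1 1 0) / moebiusDenom g z

theorem det_fin_two_val_eq_one : g.1 0 0 * g.1 1 1 - g.1 0 1 * g.1 1 0 = 1 := by
  rw [← Matrix.det_fin_two]; exact g.2

theorem ae_moebiusDenom_ne_zero : ∀ᵐ z, moebiusDenom g z ≠ 0 := by
  refine ae_iff.2 <| Set.Subsingleton.measure_zero (fun z₁ h₁ z₂ h₂ => ?_) _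
  simp only [moebiusDenom, ne_eq, not_not, mem_ofPred] at h₁ h₂
  have hdet := det_fin_two_val_eq_one g
  by_cases hc : g.1 0 1 = 0
  · simp only [hc, zero_mul, zero_add] at h₁
    simp [hc, h₁] at hdet
  · exact mul_left_cancel₀ hc (by linear_combination h₁ - h₂)

variable {g} {z : ℂ}

theorem moebiusDenom_inv_moebius (hz : moebiusDenom g z ≠ 0) :
    moebiusDenom g⁻¹ (moebius g z) = (moebiusDenom g z)⁻¹ := by
  simp only [moebius, moebiusDenom, Matrix.SpecialLinearGroup.SL2_inv_expl, Fin.isValue,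
    Matrix.cons_val', Matrix.cons_val_one, Matrix.cons_val_fin_one, Matrix.cons_val_zero,
    neg_mul] at hz ⊢
  field_simp
  linear_combination det_fin_two_val_eq_one g

theorem moebius_inv_moebius (hz : moebiusDenom g z ≠ 0) : moebius g⁻¹ (moebius g z) = z := by
  rw [moebius, moebiusDenom_inv_moebius hz, div_inv_eq_mul]
  simp only [moebius, moebiusDenom, Matrix.SpecialLinearGroup.SL2_inv_expl, Fin.isValue,
    Matrix.cons_val', Matrix.cons_val_zero, Matrix.cons_val_fin_one, Matrix.cons_val_one] at hz ⊢
  rw [add_mul, mul_assoc, div_mul_cancel₀ _ hz]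
  linear_combination z * det_fin_two_val_eq_one g

theorem hasDerivAt_moebius (hz : moebiusDenom g z ≠ 0) :
    HasDerivAt (moebius g) ((moebiusDenom g z ^ 2)⁻¹) z := by
  have hnum : HasDerivAt (fun z => g.1 0 0 * z + g.1 1 0) (g.1 0 0) z := by
    simpa using ((hasDerivAt_id z).const_mul (g.1 0 0)).add_const (g.1 1 0)
  have hden : HasDerivAt (fun z => g.1 0 1 * z + g.1 1 1) (g.1 0 1) z := by
    simpa using ((hasDerivAt_id z).const_mul (g.1 0 1)).add_const (g.1 1 1)
  refine (hnum.div hden hz).congr_deriv ?_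
  simp only [moebiusDenom] at hz ⊢
  field_simp
  linear_combination det_fin_two_val_eq_one g

variable (g)

theorem image_moebius :
    moebius g '' {z | moebiusDenom g z ≠ 0} = {w | moebiusDenom g⁻¹ w ≠ 0} := by
  ext w
  constructor
  · rintro ⟨z, hz, rfl⟩
    simpa [moebiusDenom_inv_moebius hz] using hz
  · intro hw
    refine ⟨moebius g⁻¹ w, ?_, by simpa using moebius_inv_moebius hw⟩
    have := moebiusDenom_inv_moebius hw
    rw [inv_inv] at this
    simpa [this] using hw

theorem lintegral_moebius (h : ℂ → ℝ≥0∞) :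
    ∫⁻ z, ‖(moebiusDenom g z ^ 2)⁻¹‖ₑ ^ 2 * h (moebius g z) = ∫⁻ w, h w := by
  have hs : MeasurableSet {z | moebiusDenom g z ≠ 0} :=
    (measurableSet_eq_fun (by fun_prop [moebiusDenom]) measurable_const).compl
  have key := lintegral_image_eq_lintegral_enorm_deriv_sq_mul hs
    (fun z hz => (hasDerivAt_moebius hz).hasDerivWithinAt)
    (fun z₁ h₁ z₂ h₂ h => by rw [← moebius_inv_moebius h₁, h, moebius_inv_moebius h₂]) h
  rwa [image_moebius,
    Measure.restrict_eq_self_of_ae_mem (s := {w | _}) (ae_moebiusDenom_ne_zero g⁻¹),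
    Measure.restrict_eq_self_of_ae_mem (s := {z | _}) (ae_moebiusDenom_ne_zero g), eq_comm] at key

theorem quasiMeasurePreserving_moebius :
    Measure.QuasiMeasurePreserving (moebius g) volume volume := by
  have hmeas : Measurable (moebius g) := by fun_prop [moebius, moebiusDenom]
  refine ⟨hmeas, Measure.AbsolutelyContinuous.mk fun N hN hN0 => ?_⟩
  rw [Measure.map_apply hmeas hN]
  -- `φ_g⁻¹ = φ_{g⁻¹}` is differentiable, so it maps null sets to null sets.
  set U := {w | moebiusDenom g⁻¹ w ≠ 0}
  have hsub : moebius g ⁻¹' N ⊆ moebius g⁻¹ '' (N ∩ U) ∪ {z | ¬moebiusDenom g z ≠ 0} := by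
    intro z hz
    by_cases hd : moebiusDenom g z ≠ 0
    · refine Or.inl ⟨moebius g z, ⟨hz, ?_⟩, moebius_inv_moebius hd⟩
      simpa [U, moebiusDenom_inv_moebius hd] using hd
    · exact Or.inr hd
  have hdiff : DifferentiableOn ℝ (moebius g⁻¹) U := fun w hw =>
    ((hasDerivAt_moebius hw).differentiableAt.restrictScalars ℝ).differentiableWithinAt
  exact measure_mono_null hsub <| measure_union_null
    (addHaar_image_eq_zero_of_differentiableOn_of_addHaar_eq_zero _
      (hdiff.mono inter_subset_right) (measure_mono_null inter_subset_left hN0))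
    (ae_iff.1 (ae_moebiusDenom_ne_zero g))

end Moebius

section PrincipalSeriesFactor

def principalSeriesFactor (m : ℤ) (ρ : ℝ) (L : ℂ) : ℂ :=
  (‖L‖ : ℂ) ^ ((-2 + (m : ℂ)) + I * ρ) * L ^ (-m)

variable {m : ℤ} {ρ : ℝ} {L : ℂ}

theorem norm_principalSeriesFactor (hL : L ≠ 0) :
    ‖principalSeriesFactor m ρ L‖ = ‖(L ^ 2)⁻¹‖ := by
  have hpos : 0 < ‖L‖ := norm_pos_iff.2 hL
  rw [principalSeriesFactor, norm_mul, norm_cpow_eq_rpow_re_of_pos hpos, norm_zpow, norm_inv,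
    norm_pow, ← Real.rpow_intCast, ← Real.rpow_add hpos, ← Real.rpow_natCast,
    ← Real.rpow_neg hpos.le]
  congr 1
  simp

theorem principalSeriesFactor_mul_inv (hL : L ≠ 0) :
    principalSeriesFactor m ρ L * principalSeriesFactor m ρ L⁻¹ = 1 := by
  have hpos : 0 < ‖L‖ := norm_pos_iff.2 hL
  rw [principalSeriesFactor, principalSeriesFactor, norm_inv, mul_mul_mul_comm,
    ← mul_cpow_ofReal_nonneg hpos.le (inv_nonneg.2 hpos.le), ← ofReal_mul,
    mul_inv_cancel₀ hpos.ne', ← mul_zpow, mul_inv_cancel₀ hL]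
  simp

end PrincipalSeriesFactor

section PrincipalSeriesC

variable (m : ℤ) (ρ : ℝ) (g : Matrix.SpecialLinearGroup (Fin 2) ℂ)

theorem principalSeriesC_apply (f : ℂ → ℂ) (z : ℂ) :
    principalSeriesC m ρ g f z =
      principalSeriesFactor m ρ (moebiusDenom g z) * f (moebius g z) :=
  rfl

theorem principalSeriesC_add (f₁ f₂ : ℂ → ℂ) :
    principalSeriesC m ρ g (f₁ + f₂) = principalSeriesC m ρ g f₁ + principalSeriesC m ρ g f₂ := by
  ext z
  simp only [principalSeriesC_apply, Pi.add_apply, mul_add]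

theorem principalSeriesC_smul (c : ℂ) (f : ℂ → ℂ) :
    principalSeriesC m ρ g (c • f) = c • principalSeriesC m ρ g f := by
  ext z
  simp only [principalSeriesC_apply, Pi.smul_apply, smul_eq_mul, mul_left_comm]

theorem principalSeriesC_congr_ae {f₁ f₂ : ℂ → ℂ} (h : f₁ =ᵐ[volume] f₂) :
    principalSeriesC m ρ g f₁ =ᵐ[volume] principalSeriesC m ρ g f₂ := by
  filter_upwards [(quasiMeasurePreserving_moebius g).ae_eq h] with z hz
  simp only [principalSeriesC_apply, ← Function.comp_apply (f := f₁), hz, Function.comp_apply]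

theorem aestronglyMeasurable_principalSeriesC {f : ℂ → ℂ}
    (hf : AEStronglyMeasurable f volume) :
    AEStronglyMeasurable (principalSeriesC m ρ g f) volume := by
  have hfactor : Measurable fun z => principalSeriesFactor m ρ (moebiusDenom g z) := by
    fun_prop [principalSeriesFactor, moebiusDenom]
  exact hfactor.aestronglyMeasurable.mul
    (hf.comp_quasiMeasurePreserving (quasiMeasurePreserving_moebius g))

theorem eLpNorm_principalSeriesC (f : ℂ → ℂ) :
    eLpNorm (principalSeriesC m ρ g f) 2 volume = eLpNorm f 2 volume := by
  have hpointwise : (fun z => ‖principalSeriesC m ρ g f z‖ₑ ^ 2) =ᵐ[volume]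
      fun z => ‖(moebiusDenom g z ^ 2)⁻¹‖ₑ ^ 2 * ‖f (moebius g z)‖ₑ ^ 2 := by
    filter_upwards [ae_moebiusDenom_ne_zero g] with z hz
    rw [principalSeriesC_apply, enorm_mul, ← enorm_norm, norm_principalSeriesFactor hz, enorm_norm,
      mul_pow]
  simp only [eLpNorm_eq_lintegral_rpow_enorm_toReal two_ne_zero ENNReal.ofNat_ne_top,
    ENNReal.toReal_ofNat, ENNReal.rpow_two]
  rw [lintegral_congr_ae hpointwise, lintegral_moebius g fun w => ‖f w‖ₑ ^ 2]

theorem memLp_principalSeriesC {f : ℂ → ℂ} (hf : MemLp f 2 volume) :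
    MemLp (principalSeriesC m ρ g f) 2 volume :=
  ⟨aestronglyMeasurable_principalSeriesC m ρ g hf.1, eLpNorm_principalSeriesC m ρ g f ▸ hf.2⟩

theorem principalSeriesC_inv_principalSeriesC (f : ℂ → ℂ) :
    principalSeriesC m ρ g (principalSeriesC m ρ g⁻¹ f) =ᵐ[volume] f := by
  filter_upwards [ae_moebiusDenom_ne_zero g] with z hz
  rw [principalSeriesC_apply, principalSeriesC_apply, moebiusDenom_inv_moebius hz,
    moebius_inv_moebius hz, ← mul_assoc, principalSeriesFactor_mul_inv hz, one_mul]

def principalSeriesL2 : Lp ℂ 2 (volume : Measure ℂ) →ₗᵢ[ℂ] Lp ℂ 2 (volume : Measure ℂ) where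
  toFun F := (memLp_principalSeriesC m ρ g (Lp.memLp F)).toLp
  map_add' F G := by
    rw [← MemLp.toLp_add]
    refine MemLp.toLp_congr _ _ ?_
    rw [← principalSeriesC_add]
    exact principalSeriesC_congr_ae m ρ g (Lp.coeFn_add F G)
  map_smul' c F := by
    rw [RingHom.id_apply, ← MemLp.toLp_const_smul]
    refine MemLp.toLp_congr _ _ ?_
    rw [← principalSeriesC_smul]
    exact principalSeriesC_congr_ae m ρ g (Lp.coeFn_smul c F)
  norm_map' F := by
    rw [LinearMap.coe_mk, AddHom.coe_mk, Lp.norm_toLp, eLpNorm_principalSeriesC, Lp.norm_def]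

theorem coeFn_principalSeriesL2 (F : Lp ℂ 2 (volume : Measure ℂ)) :
    principalSeriesL2 m ρ g F =ᵐ[volume] principalSeriesC m ρ g F :=
  MemLp.coeFn_toLp (memLp_principalSeriesC m ρ g (Lp.memLp F))

theorem principalSeriesL2_inv_apply (F : Lp ℂ 2 (volume : Measure ℂ)) :
    principalSeriesL2 m ρ g (principalSeriesL2 m ρ g⁻¹ F) = F :=
  Lp.ext <| (coeFn_principalSeriesL2 m ρ g _).trans <|
    (principalSeriesC_congr_ae m ρ g (coeFn_principalSeriesL2 m ρ g⁻¹ F)).trans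
      (principalSeriesC_inv_principalSeriesC m ρ g F)

end PrincipalSeriesC

theorem principalSeriesC_unitary (g : Matrix.SpecialLinearGroup (Fin 2) ℂ) (m : ℤ) (ρ : ℝ) :
    (∀ f : ℂ → ℂ, MemLp f 2 (volume : Measure ℂ) →
      MemLp (principalSeriesC m ρ g f) 2 (volume : Measure ℂ) ∧
      eLpNorm (principalSeriesC m ρ g f) 2 (volume : Measure ℂ)
        = eLpNorm f 2 (volume : Measure ℂ)) ∧
    ∃ U : Lp ℂ 2 (volume : Measure ℂ) ≃ₗᵢ[ℂ] Lp ℂ 2 (volume : Measure ℂ),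
      ∀ F : Lp ℂ 2 (volume : Measure ℂ),
        (U F : ℂ → ℂ) =ᵐ[(volume : Measure ℂ)] principalSeriesC m ρ g (F : ℂ → ℂ) :=
  ⟨fun f hf => ⟨memLp_principalSeriesC m ρ g hf, eLpNorm_principalSeriesC m ρ g f⟩,
    LinearIsometryEquiv.ofSurjective (principalSeriesL2 m ρ g)
      (fun F => ⟨_, principalSeriesL2_inv_apply m ρ g F⟩),
    coeFn_principalSeriesL2 m ρ g⟩
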